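/- arXiv:2112.10261 — 4 statements merged into one kernel-verified Lean document; each statement's English description precedes it below -/
import Mathlib

section
/- Assume GCH and let κ be a regular uncountable cardinal. Then there exists a class sequence Γ = ⟨x_α : α ∈ ON⟩ (a function from ordinals to sets of ordinals) such that every x_α has cardinality less than κ, and for every cardinal γ with cf(γ) ≥ κ, the initial segment Γ ↾ γ enumerates all of [γ]^{<κ}; that is, for every set x of ordinals below γ with |x| < κ there exists α < γ with x_α = x. -/
open Cardinal Ordinal

/-- Under GCH, the collection of subsets of ordinals that are bounded strictly below
`μ.ord` has cardinality at most `μ` (for infinite `μ`). -/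
lemma statement0_card_le
    (gch : ∀ c : Cardinal.{0}, ℵ₀ ≤ c → (2 : Cardinal.{0}) ^ c = Order.succ c)
    (κ μ : Cardinal.{0}) (hμ : ℵ₀ ≤ μ) :
    #{x : Set Ordinal.{0} | #x < Cardinal.lift.{1} κ ∧ ∃ β, β < μ.ord ∧ x ⊆ Set.Iio β}
      ≤ Cardinal.lift.{1} μ := by
  have hsub : {x : Set Ordinal.{0} | #x < Cardinal.lift.{1} κ ∧ ∃ β, β < μ.ord ∧ x ⊆ Set.Iio β}
      ⊆ ⋃ β : ↥(Set.Iio μ.ord), 𝒫 (Set.Iio (β : Ordinal.{0})) := by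
    rintro x ⟨-, β, hβ, hxβ⟩
    exact Set.mem_iUnion.2 ⟨⟨β, hβ⟩, hxβ⟩
  refine (mk_le_mk_of_subset hsub).trans ((mk_iUnion_le _).trans ?_)
  have h1 : #(↥(Set.Iio μ.ord)) = Cardinal.lift.{1} μ := by
    rw [Ordinal.mk_Iio_ordinal, Cardinal.card_ord]
  have h2 : ⨆ β : ↥(Set.Iio μ.ord), #(↥(𝒫 (Set.Iio (β : Ordinal.{0}))))
      ≤ Cardinal.lift.{1} μ := by
    refine ciSup_le' fun β => ?_
    rw [mk_powerset, Ordinal.mk_Iio_ordinal]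
    have he : (2 : Cardinal.{1}) ^ Cardinal.lift.{1} (β : Ordinal.{0}).card
        = Cardinal.lift.{1} (2 ^ (β : Ordinal.{0}).card) := by
      rw [Cardinal.lift_power, Cardinal.lift_two]
    rw [he, Cardinal.lift_le]
    rcases le_or_gt ℵ₀ (β : Ordinal.{0}).card with h | h
    · rw [gch _ h]
      exact Order.succ_le_of_lt (Cardinal.lt_ord.1 β.2)
    · exact le_trans (Cardinal.power_lt_aleph0 (by exact_mod_cast Cardinal.nat_lt_aleph0 2) h).le hμ
  calc #(↥(Set.Iio μ.ord)) * ⨆ β : ↥(Set.Iio μ.ord), #(↥(𝒫 (Set.Iio (β : Ordinal.{0}))))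
      ≤ Cardinal.lift.{1} μ * Cardinal.lift.{1} μ := by
        rw [h1]; exact mul_le_mul_right h2 _
    _ = Cardinal.lift.{1} μ := Cardinal.mul_eq_self (by rwa [Cardinal.aleph0_le_lift])

/-- From a cardinality bound we get an enumeration of a nonempty family of sets of
ordinals by the ordinals below `μ.ord`. -/
lemma statement0_exists_enum (S : Set (Set Ordinal.{0})) (hne : S.Nonempty)
    (μ : Cardinal.{0}) (hle : #S ≤ Cardinal.lift.{1} μ) :
    ∃ f : Ordinal.{0} → Set Ordinal.{0},
      (∀ δ, f δ ∈ S) ∧ ∀ x ∈ S, ∃ δ, δ < μ.ord ∧ f δ = x := by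
  classical
  have hle' : #S ≤ #(↥(Set.Iio μ.ord)) := by
    rw [Ordinal.mk_Iio_ordinal, Cardinal.card_ord]; exact hle
  obtain ⟨e⟩ := (Cardinal.le_def _ _).1 hle'
  refine ⟨fun δ => if h : ∃ s : S, ((e s : ↥(Set.Iio μ.ord)) : Ordinal.{0}) = δ
      then (h.choose : Set Ordinal.{0}) else hne.choose, ?_, ?_⟩
  · intro δ; dsimp only; split_ifs with h
    · exact (h.choose).2
    · exact hne.choose_spec
  · intro x hx
    refine ⟨((e ⟨x, hx⟩ : ↥(Set.Iio μ.ord)) : Ordinal.{0}), (e ⟨x, hx⟩).2, ?_⟩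
    have h : ∃ s : S, ((e s : ↥(Set.Iio μ.ord)) : Ordinal.{0})
        = ((e ⟨x, hx⟩ : ↥(Set.Iio μ.ord)) : Ordinal.{0}) := ⟨⟨x, hx⟩, rfl⟩
    dsimp only
    rw [dif_pos h]
    have h2 : h.choose = (⟨x, hx⟩ : S) := e.injective (Subtype.ext h.choose_spec)
    rw [h2]

/-- Assume GCH and let κ be a regular uncountable cardinal. Then there exists a class
sequence Γ = ⟨x_α : α ∈ ON⟩ such that every x_α has cardinality less than κ, and for
every cardinal γ with cf(γ) ≥ κ, every set of ordinals below γ of cardinality < κ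
occurs as x_α for some α < γ. -/
theorem statement0
    (gch : ∀ c : Cardinal.{0}, ℵ₀ ≤ c → (2 : Cardinal.{0}) ^ c = Order.succ c)
    (κ : Cardinal.{0}) (hreg : κ.IsRegular) (hunc : ℵ₀ < κ) :
    ∃ Γ : Ordinal.{0} → Set Ordinal.{0},
      (∀ α : Ordinal.{0}, #(Γ α) < Cardinal.lift.{1} κ) ∧
      ∀ γ : Cardinal.{0}, κ ≤ γ.ord.cof →
        ∀ x : Set Ordinal.{0}, x ⊆ Set.Iio γ.ord →
          #x < Cardinal.lift.{1} κ →
          ∃ α : Ordinal.{0}, α < γ.ord ∧ Γ α = x := by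
  classical
  set S : Cardinal.{0} → Set (Set Ordinal.{0}) := fun μ =>
    {x | #x < Cardinal.lift.{1} κ ∧ ∃ β, β < μ.ord ∧ x ⊆ Set.Iio β} with hS
  have hκ0 : (0 : Cardinal.{0}) < κ := lt_trans Cardinal.aleph0_pos hunc
  have hne : ∀ μ : Cardinal.{0}, ℵ₀ ≤ μ → (∅ : Set Ordinal.{0}) ∈ S μ := by
    intro μ hμ
    refine ⟨by rw [Cardinal.mk_emptyCollection]; exact pos_iff_ne_zero.2 (by simp [Cardinal.lift_eq_zero, hκ0.ne']), 0, ?_, by simp⟩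
    exact Cardinal.lt_ord.2 (by rw [Ordinal.card_zero]; exact lt_of_lt_of_le Cardinal.aleph0_pos hμ)
  have key : ∀ μ : Cardinal.{0}, ∃ f : Ordinal.{0} → Set Ordinal.{0},
      κ ≤ μ → ((∀ δ, f δ ∈ S μ) ∧ ∀ x ∈ S μ, ∃ δ, δ < μ.ord ∧ f δ = x) := by
    intro μ
    by_cases h : κ ≤ μ
    · have hμ : ℵ₀ ≤ μ := le_trans hunc.le h
      obtain ⟨f, hf1, hf2⟩ := statement0_exists_enum (S μ) ⟨∅, hne μ hμ⟩ μ
        (statement0_card_le gch κ μ hμ)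
      exact ⟨f, fun _ => ⟨hf1, hf2⟩⟩
    · exact ⟨fun _ => ∅, fun hc => absurd hc h⟩
  choose F hF using key
  refine ⟨fun α => if α.card < κ then F κ α else F (Order.succ α.card) (α - α.card.ord), ?_, ?_⟩
  · intro α
    dsimp only
    by_cases h : α.card < κ
    · rw [if_pos h]
      exact ((hF κ le_rfl).1 _).1
    · rw [if_neg h]
      exact ((hF (Order.succ α.card) ((not_lt.1 h).trans (Order.le_succ _))).1 _).1
  · intro γ hcof x hxsub hxcard
    have hκγ : κ ≤ γ := le_trans hcof (by
      have := Ordinal.cof_le_card γ.ord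
      rwa [Cardinal.card_ord] at this)
    have hγinf : ℵ₀ ≤ γ := hunc.le.trans hκγ
    -- x is bounded strictly below γ.ord
    have hsmall : Small.{0} ↥x := small_subset hxsub
    set g : Shrink.{0} ↥x → Ordinal.{0} := fun i => ((equivShrink ↥x).symm i : Ordinal.{0})
      with hg
    have hglt : ∀ i, g i < γ.ord := fun i => hxsub ((equivShrink ↥x).symm i).2
    have hcards : #(Shrink.{0} ↥x) < γ.ord.cof := by
      have h2 : Cardinal.lift.{1} #(Shrink.{0} ↥x) = #(↥x) := by
        simpa using Cardinal.lift_mk_shrink' ↥x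
      have h3 : Cardinal.lift.{1} #(Shrink.{0} ↥x) < Cardinal.lift.{1} γ.ord.cof := by
        rw [h2]; exact lt_of_lt_of_le hxcard (Cardinal.lift_le.2 hcof)
      exact Cardinal.lift_lt.1 h3
    have hsup : iSup g < γ.ord := Ordinal.iSup_lt_of_lt_cof hcards hglt
    set β : Ordinal.{0} := Order.succ (iSup g) with hβ
    have hβγ : β < γ.ord := (Cardinal.isSuccLimit_ord hγinf).succ_lt hsup
    have hxβ : x ⊆ Set.Iio β := by
      intro a ha
      have hae : a = g (equivShrink ↥x ⟨a, ha⟩) := by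
        rw [hg]; simp
      have : a ≤ iSup g := by
        rw [hae]; exact Ordinal.le_iSup g _
      exact Order.lt_succ_iff.2 this
    by_cases hc : β.card < κ
    · -- use the κ-block
      have hxS : x ∈ S κ := ⟨hxcard, β, Cardinal.lt_ord.2 hc, hxβ⟩
      obtain ⟨δ, hδ, hfδ⟩ := (hF κ le_rfl).2 x hxS
      refine ⟨δ, lt_of_lt_of_le hδ (Cardinal.ord_le_ord.2 hκγ), ?_⟩
      dsimp only
      rw [if_pos (Cardinal.lt_ord.1 hδ)]
      exact hfδ
    · -- use the (card β)⁺-block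
      have hkl : κ ≤ β.card := not_lt.1 hc
      have hlg : β.card < γ := Cardinal.lt_ord.1 hβγ
      have hxS : x ∈ S (Order.succ β.card) :=
        ⟨hxcard, β, Cardinal.lt_ord.2 (Order.lt_succ _), hxβ⟩
      obtain ⟨δ, hδ, hfδ⟩ := (hF (Order.succ β.card) (hkl.trans (Order.le_succ _))).2 x hxS
      have hδcard : δ.card ≤ β.card := Order.lt_succ_iff.1 (Cardinal.lt_ord.1 hδ)
      set α : Ordinal.{0} := β.card.ord + δ with hα
      have hαcard : α.card = β.card := by
        rw [hα, Ordinal.card_add, Cardinal.card_ord]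
        exact Cardinal.add_eq_left (hunc.le.trans hkl) hδcard
      have hαlt : α < (Order.succ β.card).ord :=
        Cardinal.lt_ord.2 (by rw [hαcard]; exact Order.lt_succ _)
      refine ⟨α, lt_of_lt_of_le hαlt (Cardinal.ord_le_ord.2 (Order.succ_le_of_lt hlg)), ?_⟩
      dsimp only
      rw [if_neg (by rw [hαcard]; exact not_lt.2 hkl)]
      rw [hαcard, hα, Ordinal.add_sub_cancel]
      exact hfδ
end

section
/- Assume GCH, let κ be a regular uncountable cardinal, and let s be a function defined on the ordinals below κ whose values are cardinals below κ. Then there exists a class sequence Γ = ⟨x_α : α ∈ ON⟩ (a function from ordinals to sets of ordinals) such that every x_α has cardinality less than κ, and for every cardinal γ ≥ κ and every ordinal α < κ with cf(γ) ≥ s(α), every set x of ordinals below γ with |x| < s(α) occurs as x_β for some β < γ. -/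
/-!
For an infinite cardinal `c`, the ordinals of cardinality `c` form the interval `[c, c⁺)`,
of order type `c⁺`. Under GCH there are only `c⁺ · 2^c = c⁺` subsets of `c⁺` bounded below `c⁺`,
so this block of indices can enumerate all of them. A set `x ⊆ γ` with `|x| < cf γ` is bounded
by some `δ < γ`, hence is enumerated in the block of `c = max |δ| ℵ₀`, which lies below `γ`
because `c < γ`.
-/

open Cardinal Ordinal Set Order

universe u

theorem exists_lt_subset_Iio_of_mk_lt_cof {s : Set Ordinal.{u}} {a : Ordinal.{u}}
    (hs : s ⊆ Iio a) (ha : #s < lift.{u + 1} a.cof) : ∃ δ < a, s ⊆ Iio δ := by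
  rw [lift_cof] at ha
  refine ⟨_, sSup_add_one_lt_of_lt_cof ha hs, fun i hi => (lt_add_one i).trans_le ?_⟩
  refine le_csSup ⟨a, ?_⟩ (mem_image_of_mem _ hi)
  rintro _ ⟨j, hj, rfl⟩
  exact add_one_le_of_lt (hs hj)

theorem exists_forall_mem_surjOn_of_mk_le {α β : Type u} {s : Set α} {t : Set β}
    (hs : s.Nonempty) (hst : #s ≤ #t) : ∃ f : β → α, (∀ b, f b ∈ s) ∧ SurjOn f t s := by
  classical
  obtain ⟨e⟩ := hst
  have : Nonempty s := hs.to_subtype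
  refine ⟨fun b => if hb : b ∈ t then (Function.invFun e ⟨b, hb⟩ : s) else hs.some,
    fun b => ?_, fun a ha => ?_⟩
  · dsimp only
    split_ifs
    exacts [Subtype.prop _, hs.some_mem]
  · obtain ⟨⟨b, hb⟩, hab⟩ := Function.invFun_surjective e.injective ⟨a, ha⟩
    exact ⟨b, hb, by simp [hb, hab]⟩

theorem mk_setOf_subset_Iio_lt_ord_succ_le {c : Cardinal.{u}} (hc : ℵ₀ ≤ c)
    (h2c : 2 ^ c ≤ succ c) :
    #{x : Set Ordinal.{u} | ∃ δ < (succ c).ord, x ⊆ Iio δ} ≤ lift.{u + 1} (succ c) := by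
  have hunion : {x : Set Ordinal.{u} | ∃ δ < (succ c).ord, x ⊆ Iio δ} =
      ⋃ δ ∈ Iio (succ c).ord, 𝒫 Iio δ := by
    ext x; simp
  have hpow : ∀ δ : Iio (succ c).ord, #(𝒫 Iio δ.1) ≤ lift.{u + 1} (succ c) := by
    rintro ⟨δ, hδ⟩
    rw [mk_powerset, Cardinal.mk_Iio_ordinal, ← lift_two_power, Cardinal.lift_le]
    exact (power_le_power_left two_ne_zero (card_le_iff.2 hδ)).trans h2c
  calc _ ≤ #(Iio (succ c).ord) * ⨆ δ : Iio (succ c).ord, #(𝒫 Iio δ.1) := by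
        rw [hunion]; exact mk_biUnion_le _ _
    _ ≤ lift.{u + 1} (succ c) * lift.{u + 1} (succ c) := by
        rw [Cardinal.mk_Iio_ordinal, card_ord]; gcongr; exact ciSup_le' hpow
    _ = lift.{u + 1} (succ c) :=
        mul_eq_self (aleph0_le_lift.2 (hc.trans (le_succ c)))

theorem ord_add_lt_ord_succ {c : Cardinal} (hc : ℵ₀ ≤ c) {ξ : Ordinal} (hξ : ξ < (succ c).ord) :
    c.ord + ξ < (succ c).ord :=
  isPrincipal_add_ord (hc.trans (le_succ c)) (ord_lt_ord.2 (lt_succ c)) hξ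

theorem card_ord_add_of_lt_ord_succ {c : Cardinal} (hc : ℵ₀ ≤ c) {ξ : Ordinal}
    (hξ : ξ < (succ c).ord) : (c.ord + ξ).card = c :=
  le_antisymm (card_le_iff.2 (ord_add_lt_ord_succ hc hξ))
    (ord_le.1 le_self_add)

theorem exists_ordinal_enum_of_mk_le_succ {α : Type (u + 1)} (B : Cardinal.{u} → Set α)
    (hne : ∀ c, (B c).Nonempty) (hle : ∀ c, ℵ₀ ≤ c → #(B c) ≤ lift.{u + 1} (succ c)) :
    ∃ Γ : Ordinal.{u} → α, (∀ β, Γ β ∈ B β.card) ∧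
      ∀ c, ℵ₀ ≤ c → ∀ x ∈ B c, ∃ β, β.card = c ∧ Γ β = x := by
  have hblock : ∀ c, ∃ f : Ordinal.{u} → α,
      (∀ ξ, f ξ ∈ B c) ∧ (ℵ₀ ≤ c → SurjOn f (Iio (succ c).ord) (B c)) := by
    intro c
    by_cases hc : ℵ₀ ≤ c
    · have hmk : #(B c) ≤ #(Iio (succ c).ord) := by
        rw [Cardinal.mk_Iio_ordinal, card_ord]; exact hle c hc
      obtain ⟨f, hfB, hf⟩ := exists_forall_mem_surjOn_of_mk_le (hne c) hmk
      exact ⟨f, hfB, fun _ => hf⟩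
    · exact ⟨fun _ => (hne c).some, fun _ => (hne c).some_mem, fun h => absurd h hc⟩
  choose f hfB hf using hblock
  refine ⟨fun β => f β.card (β - β.card.ord), fun β => hfB _ _, ?_⟩
  intro c hc x hx
  obtain ⟨ξ, hξ, rfl⟩ := hf c hc hx
  refine ⟨c.ord + ξ, card_ord_add_of_lt_ord_succ hc hξ, ?_⟩
  simp only [card_ord_add_of_lt_ord_succ hc hξ, Ordinal.add_sub_cancel]

theorem statement1_general
    (gch : ∀ c : Cardinal.{0}, ℵ₀ ≤ c → (2 : Cardinal.{0}) ^ c = Order.succ c)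
    (κ : Cardinal.{0}) (hunc : ℵ₀ < κ)
    (s : Ordinal.{0} → Cardinal.{0}) (hs : ∀ α < κ.ord, s α < κ) :
    ∃ Γ : Ordinal.{0} → Set Ordinal.{0},
      (∀ α : Ordinal.{0}, #(Γ α) < Cardinal.lift.{1} κ) ∧
      ∀ γ : Cardinal.{0}, κ ≤ γ →
        ∀ α : Ordinal.{0}, α < κ.ord → s α ≤ γ.ord.cof →
          ∀ x : Set Ordinal.{0}, x ⊆ Set.Iio γ.ord →
            #x < Cardinal.lift.{1} (s α) →
            ∃ β : Ordinal.{0}, β < γ.ord ∧ Γ β = x := by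
  let B : Cardinal.{0} → Set (Set Ordinal.{0}) := fun c =>
    {x | (∃ δ < (succ c).ord, x ⊆ Iio δ) ∧ #x < lift.{1} κ}
  have hne : ∀ c, (B c).Nonempty := fun c =>
    ⟨∅, ⟨0, by simp, empty_subset _⟩, by simpa using aleph0_pos.trans hunc⟩
  have hle : ∀ c, ℵ₀ ≤ c → #(B c) ≤ lift.{1} (succ c) := fun c hc =>
    (mk_le_mk_of_subset fun _ hx => hx.1).trans
      (mk_setOf_subset_Iio_lt_ord_succ_le hc (gch c hc).le)
  obtain ⟨Γ, hΓB, hΓ⟩ := exists_ordinal_enum_of_mk_le_succ B hne hle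
  refine ⟨Γ, fun β => (hΓB β).2, ?_⟩
  intro γ hκγ α hα hsγ x hxγ hxs
  obtain ⟨δ, hδγ, hxδ⟩ :=
    exists_lt_subset_Iio_of_mk_lt_cof hxγ (hxs.trans_le (Cardinal.lift_le.2 hsγ))
  have hxB : x ∈ B (max δ.card ℵ₀) :=
    ⟨⟨δ, card_le_iff.1 (le_max_left _ _), hxδ⟩, hxs.trans (Cardinal.lift_lt.2 (hs α hα))⟩
  obtain ⟨β, hβ, rfl⟩ := hΓ _ (le_max_right _ _) x hxB
  exact ⟨β, lt_ord.2 (hβ ▸ max_lt (lt_ord.1 hδγ) (hunc.trans_le hκγ)), rfl⟩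

/-- Assume GCH, let κ be a regular uncountable cardinal, and let s assign to each
ordinal below κ a cardinal below κ. Then there is a class sequence Γ of sets of
ordinals, each of cardinality < κ, such that for every cardinal γ ≥ κ and every
α < κ with cf(γ) ≥ s(α), every set of ordinals below γ of cardinality < s(α)
occurs as x_β for some β < γ. -/
theorem statement1
    (gch : ∀ c : Cardinal.{0}, ℵ₀ ≤ c → (2 : Cardinal.{0}) ^ c = Order.succ c)
    (κ : Cardinal.{0}) (hreg : κ.IsRegular) (hunc : ℵ₀ < κ)
    (s : Ordinal.{0} → Cardinal.{0}) (hs : ∀ α < κ.ord, s α < κ) :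
    ∃ Γ : Ordinal.{0} → Set Ordinal.{0},
      (∀ α : Ordinal.{0}, #(Γ α) < Cardinal.lift.{1} κ) ∧
      ∀ γ : Cardinal.{0}, κ ≤ γ →
        ∀ α : Ordinal.{0}, α < κ.ord → s α ≤ γ.ord.cof →
          ∀ x : Set Ordinal.{0}, x ⊆ Set.Iio γ.ord →
            #x < Cardinal.lift.{1} (s α) →
            ∃ β : Ordinal.{0}, β < γ.ord ∧ Γ β = x :=
  statement1_general gch κ hunc s hs
end

section
/- Assume GCH. Let γ₀ be an infinite regular cardinal and γ₁ an ordinal with cf(γ₁) > γ₀. Then the poset 𝔸(γ₀,γ₁) is γ₀⁺⁺-c.c.: every antichain in 𝔸(γ₀,γ₁), i.e., every set A of conditions such that any two distinct f, g ∈ A are incompatible (f ∪ g is not a function, equivalently f and g have no common extension in 𝔸(γ₀,γ₁)), has cardinality at most γ₀⁺. -/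
open Cardinal Ordinal

/-- A condition of the poset 𝔸(γ₀,γ₁): a partial function (a functional set of
ordered pairs) with domain contained in γ₁, range contained in γ₀, and of
cardinality at most γ₀.  The order is f ≤ g iff f ⊇ g. -/
def IsCohenCond (γ₀ : Cardinal.{0}) (γ₁ : Ordinal.{0})
    (f : Set (Ordinal.{0} × Ordinal.{0})) : Prop :=
  (∀ p ∈ f, p.1 < γ₁ ∧ p.2 < γ₀.ord) ∧
  (∀ a b b', (a, b) ∈ f → (a, b') ∈ f → b = b') ∧
  #f ≤ Cardinal.lift.{1} γ₀

namespace Statement7Aux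

/-- restriction of a set of pairs to first coordinates in `D` -/
def restrict (D : Set Ordinal.{0}) (f : Set (Ordinal.{0} × Ordinal.{0})) :
    Set (Ordinal.{0} × Ordinal.{0}) := f ∩ {q | q.1 ∈ D}

/-- union of domains -/
def Dom (S : Set (Set (Ordinal.{0} × Ordinal.{0}))) : Set Ordinal.{0} :=
  ⋃ g ∈ S, Prod.fst '' g

open Classical in
noncomputable def pick (A : Set (Set (Ordinal.{0} × Ordinal.{0})))
    (D : Set Ordinal.{0}) (p : Set (Ordinal.{0} × Ordinal.{0})) :
    Set (Ordinal.{0} × Ordinal.{0}) :=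
  if h : ∃ g, g ∈ A ∧ restrict D g = p then h.choose else ∅

lemma pick_spec {A D p} (h : ∃ g, g ∈ A ∧ restrict D g = p) :
    pick A D p ∈ A ∧ restrict D (pick A D p) = p := by
  rw [pick, dif_pos h]
  exact ⟨h.choose_spec.1, h.choose_spec.2⟩

noncomputable def step (A S : Set (Set (Ordinal.{0} × Ordinal.{0}))) :
    Set (Set (Ordinal.{0} × Ordinal.{0})) :=
  S ∪ (pick A (Dom S)) '' (restrict (Dom S) '' A)

lemma subset_step (A S) : S ⊆ step A S := Set.subset_union_left

lemma step_subset {A S} (hS : S ⊆ A) : step A S ⊆ A := by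
  rintro x (hx | ⟨p, ⟨f, hf, rfl⟩, rfl⟩)
  · exact hS hx
  · exact (pick_spec ⟨f, hf, rfl⟩).1

noncomputable def chain (A : Set (Set (Ordinal.{0} × Ordinal.{0})))
    {ι : Type 1} [LinearOrder ι] [WellFoundedLT ι] : ι → Set (Set (Ordinal.{0} × Ordinal.{0})) :=
  (wellFounded_lt).fix fun i rec => step A (⋃ j : {j : ι // j < i}, rec j j.2)

lemma chain_eq (A : Set (Set (Ordinal.{0} × Ordinal.{0})))
    {ι : Type 1} [LinearOrder ι] [WellFoundedLT ι] (i : ι) :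
    chain A i = step A (⋃ j : {j : ι // j < i}, chain A j.1) := by
  simp only [chain]
  rw [WellFounded.fix_eq]

lemma chain_subset {A : Set (Set (Ordinal.{0} × Ordinal.{0}))}
    {ι : Type 1} [LinearOrder ι] [WellFoundedLT ι] (i : ι) : chain A i ⊆ A := by
  induction i using WellFoundedLT.induction with
  | ind i IH =>
    rw [chain_eq]
    apply step_subset
    exact Set.iUnion_subset fun j => IH _ j.2

lemma Dom_mono {S S'} (h : S ⊆ S') : Dom S ⊆ Dom S' :=
  Set.biUnion_subset_biUnion_left h

end Statement7Aux

open Statement7Aux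

/-- Assume GCH.  If γ₀ is an infinite regular cardinal and cf(γ₁) > γ₀, then
𝔸(γ₀,γ₁) is γ₀⁺⁺-c.c.: every antichain (any two distinct members have no common
extension) has cardinality at most γ₀⁺. -/
theorem statement7
    (gch : ∀ c : Cardinal.{0}, ℵ₀ ≤ c → (2 : Cardinal.{0}) ^ c = Order.succ c)
    (γ₀ : Cardinal.{0}) (hreg : γ₀.IsRegular) (γ₁ : Ordinal.{0})
    (hcf : γ₀ < γ₁.cof)
    (A : Set (Set (Ordinal.{0} × Ordinal.{0})))
    (hcond : ∀ f ∈ A, IsCohenCond γ₀ γ₁ f)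
    (hanti : ∀ f ∈ A, ∀ g ∈ A, f ≠ g →
      ¬ ∃ h : Set (Ordinal.{0} × Ordinal.{0}),
          IsCohenCond γ₀ γ₁ h ∧ f ⊆ h ∧ g ⊆ h) :
    #A ≤ Cardinal.lift.{1} (Order.succ γ₀) := by
  classical
  set κ := Cardinal.lift.{1} γ₀ with hκdef
  set μ := Order.succ κ with hμdef
  have hκinf : ℵ₀ ≤ κ := Cardinal.aleph0_le_lift.mpr hreg.aleph0_le
  have hκμ : κ < μ := Order.lt_succ κ
  have hμinf : ℵ₀ ≤ μ := hκinf.trans hκμ.le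
  have hμeq : μ = Cardinal.lift.{1} (Order.succ γ₀) := (Cardinal.lift_succ γ₀).symm
  have h2κ : (2 : Cardinal.{1}) ^ κ = μ := by
    have h := congrArg Cardinal.lift.{1} (gch γ₀ hreg.aleph0_le)
    rwa [Cardinal.lift_power, Cardinal.lift_two, Cardinal.lift_succ] at h
  have hμκ : μ ^ κ = μ := by
    rw [← h2κ, ← Cardinal.power_mul, Cardinal.mul_eq_self hκinf]
  have hμreg : μ.IsRegular := Cardinal.isRegular_succ hκinf
  have hcard : ∀ f ∈ A, #f ≤ κ := fun f hf => (hcond f hf).2.2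
  -- bound on the number of restrictions
  have hres : ∀ D : Set Ordinal.{0}, #D ≤ μ → #((restrict D) '' A) ≤ μ := by
    intro D hD
    set E : Set (Ordinal.{0} × Ordinal.{0}) := D ×ˢ Set.Iio γ₀.ord with hEdef
    have hE : #E ≤ μ := by
      have h1 : #E = #D * #(Set.Iio γ₀.ord) := by
        rw [Cardinal.mk_congr (Equiv.Set.prod D (Set.Iio γ₀.ord)), Cardinal.mk_prod,
          Cardinal.lift_id, Cardinal.lift_id]
      have h2 : #(Set.Iio γ₀.ord) = κ := by
        rw [Ordinal.mk_Iio_ordinal, Cardinal.card_ord]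
      rw [h1, h2]
      calc #D * κ ≤ μ * μ := mul_le_mul' hD hκμ.le
        _ = μ := Cardinal.mul_eq_self hμinf
    have hsub : (restrict D) '' A ⊆ {t | t ⊆ E ∧ #t ≤ κ} := by
      rintro t ⟨f, hf, rfl⟩
      refine ⟨?_, (Cardinal.mk_le_mk_of_subset Set.inter_subset_left).trans (hcard f hf)⟩
      rintro ⟨a, b⟩ ⟨hab, haD⟩
      exact ⟨haD, ((hcond f hf).1 _ hab).2⟩
    have hmap : #((restrict D) '' A) ≤ #{t : Set (Ordinal.{0} × Ordinal.{0}) // t ⊆ E ∧ #t ≤ κ} :=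
      Cardinal.mk_le_mk_of_subset hsub
    refine hmap.trans ((Cardinal.mk_bounded_subset_le E κ).trans ?_)
    calc (max #E ℵ₀) ^ κ ≤ μ ^ κ := Cardinal.power_le_power_right (max_le hE hμinf)
      _ = μ := hμκ
  -- the index type
  have hι : #μ.ord.ToType = μ := by
    rw [Cardinal.mk_toType, Cardinal.card_ord]
  -- cardinality of the stages
  have hstage : ∀ i : μ.ord.ToType, #(chain A i) ≤ μ := by
    intro i
    induction i using WellFoundedLT.induction with
    | ind i IH =>
      rw [chain_eq]
      set U := ⋃ j : {j : μ.ord.ToType // j < i}, chain A j.1 with hUdef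
      have hU : #U ≤ μ := by
        calc #U ≤ Cardinal.sum (fun j : {j : μ.ord.ToType // j < i} => #(chain A j.1)) :=
              Cardinal.mk_iUnion_le_sum_mk
          _ ≤ Cardinal.sum (fun _ : {j : μ.ord.ToType // j < i} => μ) :=
              Cardinal.sum_le_sum _ _ fun j => IH j.1 j.2
          _ = #{j : μ.ord.ToType // j < i} * μ := Cardinal.sum_const' _ _
          _ ≤ μ * μ := mul_le_mul' ((Cardinal.mk_subtype_le _).trans hι.le) le_rfl
          _ = μ := Cardinal.mul_eq_self hμinf
      have hDomU : #(Dom U) ≤ μ := by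
        have h1 : Dom U = ⋃ g : ↥U, Prod.fst '' (g : Set (Ordinal.{0} × Ordinal.{0})) := by
          rw [Dom, Set.biUnion_eq_iUnion]
        rw [h1]
        calc #(⋃ g : ↥U, Prod.fst '' (g : Set (Ordinal.{0} × Ordinal.{0})))
            ≤ Cardinal.sum (fun g : ↥U => #(Prod.fst '' (g : Set (Ordinal.{0} × Ordinal.{0})))) :=
              Cardinal.mk_iUnion_le_sum_mk
          _ ≤ Cardinal.sum (fun _ : ↥U => κ) := by
              refine Cardinal.sum_le_sum _ _ fun g => ?_
              have hgA : (g : Set (Ordinal.{0} × Ordinal.{0})) ∈ A := by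
                have hUA : U ⊆ A := Set.iUnion_subset fun j => chain_subset j.1
                exact hUA g.2
              exact Cardinal.mk_image_le.trans (hcard _ hgA)
          _ = #↥U * κ := Cardinal.sum_const' _ _
          _ ≤ μ * μ := mul_le_mul' hU hκμ.le
          _ = μ := Cardinal.mul_eq_self hμinf
      calc #(step A U) ≤ #U + #(pick A (Dom U) '' (restrict (Dom U) '' A)) :=
            Cardinal.mk_union_le _ _
        _ ≤ μ + μ := add_le_add hU (Cardinal.mk_image_le.trans (hres _ hDomU))
        _ = μ := Cardinal.add_eq_self hμinf
  -- the total chosen family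
  set C : Set (Set (Ordinal.{0} × Ordinal.{0})) := ⋃ i : μ.ord.ToType, chain A i with hCdef
  have hCA : C ⊆ A := Set.iUnion_subset fun i => chain_subset i
  have hCcard : #C ≤ μ := by
    calc #C ≤ Cardinal.sum (fun i : μ.ord.ToType => #(chain A i)) := Cardinal.mk_iUnion_le_sum_mk
      _ ≤ Cardinal.sum (fun _ : μ.ord.ToType => μ) := Cardinal.sum_le_sum _ _ hstage
      _ = #μ.ord.ToType * μ := Cardinal.sum_const' _ _
      _ = μ := by rw [hι, Cardinal.mul_eq_self hμinf]
  -- main argument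
  by_contra hA
  rw [← hμeq] at hA
  push_neg at hA
  obtain ⟨f, hf, hfC⟩ : ∃ f, f ∈ A ∧ f ∉ C := by
    by_contra h
    push_neg at h
    exact absurd ((Cardinal.mk_le_mk_of_subset fun x hx => h x hx).trans hCcard) hA.not_ge
  -- the trace of f on the total domain
  set T : Set Ordinal.{0} := (Prod.fst '' f) ∩ Dom C with hTdef
  have hTcard : #T ≤ κ :=
    (Cardinal.mk_le_mk_of_subset Set.inter_subset_left).trans
      (Cardinal.mk_image_le.trans (hcard f hf))
  have hidx : ∀ a : ↥T, ∃ i : μ.ord.ToType, (a : Ordinal.{0}) ∈ Dom (chain A i) := by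
    rintro ⟨a, haf, haC⟩
    rw [Dom] at haC
    simp only [Set.mem_iUnion] at haC
    obtain ⟨g, hgC, hag⟩ := haC
    rw [hCdef] at hgC
    simp only [Set.mem_iUnion] at hgC
    obtain ⟨i, hgi⟩ := hgC
    exact ⟨i, Set.mem_biUnion hgi hag⟩
  choose F hF using hidx
  -- bound the indices
  obtain ⟨istar, histar⟩ : ∃ b : μ.ord.ToType, ∀ x ∈ Set.range F, x < b := by
    apply not_isCofinal_iff.1
    intro hc
    have hcl := Order.cof_le hc
    rw [Ordinal.cof_toType] at hcl
    have hlt : #(Set.range F) < μ.ord.cof :=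
      calc #(Set.range F) ≤ #↥T := Cardinal.mk_range_le
        _ ≤ κ := hTcard
        _ < μ := hκμ
        _ = μ.ord.cof := hμreg.cof_eq.symm
    exact absurd hcl hlt.not_ge
  set U : Set (Set (Ordinal.{0} × Ordinal.{0})) :=
    ⋃ j : {j : μ.ord.ToType // j < istar}, chain A j.1 with hUdef
  have hTD : T ⊆ Dom U := by
    rintro a ha
    have h1 : (⟨a, ha⟩ : ↥T).1 ∈ Dom (chain A (F ⟨a, ha⟩)) := hF ⟨a, ha⟩
    refine Dom_mono ?_ h1
    exact Set.subset_iUnion (fun j : {j : μ.ord.ToType // j < istar} => chain A j.1)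
      ⟨F ⟨a, ha⟩, histar _ (Set.mem_range_self _)⟩
  -- the chosen companion of f
  have hex : ∃ g, g ∈ A ∧ restrict (Dom U) g = restrict (Dom U) f := ⟨f, hf, rfl⟩
  set g := pick A (Dom U) (restrict (Dom U) f) with hgdef
  obtain ⟨hgA, hgr⟩ := pick_spec hex
  have hgC : g ∈ C := by
    have h1 : g ∈ chain A istar := by
      rw [chain_eq, ← hUdef]
      exact Or.inr ⟨restrict (Dom U) f, ⟨f, hf, rfl⟩, rfl⟩
    exact Set.mem_iUnion.mpr ⟨istar, h1⟩
  have hgf : f ≠ g := fun h => hfC (h ▸ hgC)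
  -- key compatibility fact
  have key : ∀ a b b', (a, b) ∈ f → (a, b') ∈ g → b = b' := by
    intro a b b' hab hab'
    have haT : a ∈ T := by
      refine ⟨⟨(a, b), hab, rfl⟩, ?_⟩
      rw [Dom]
      exact Set.mem_biUnion hgC ⟨(a, b'), hab', rfl⟩
    have haD : a ∈ Dom U := hTD haT
    have h1 : (a, b) ∈ restrict (Dom U) f := ⟨hab, haD⟩
    rw [← hgr] at h1
    exact (hcond g hgA).2.1 a b b' h1.1 hab'
  -- f and g are compatible: contradiction with the antichain property
  refine hanti f hf g hgA hgf ⟨f ∪ g, ⟨?_, ?_, ?_⟩, Set.subset_union_left, Set.subset_union_right⟩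
  · rintro p (hp | hp)
    · exact (hcond f hf).1 p hp
    · exact (hcond g hgA).1 p hp
  · rintro a b b' (h1 | h1) (h2 | h2)
    · exact (hcond f hf).2.1 a b b' h1 h2
    · exact key a b b' h1 h2
    · exact (key a b' b h2 h1).symm
    · exact (hcond g hgA).2.1 a b b' h1 h2
  · calc #(f ∪ g : Set (Ordinal.{0} × Ordinal.{0})) ≤ #f + #g := Cardinal.mk_union_le _ _
      _ ≤ κ + κ := add_le_add (hcard f hf) (hcard g hgA)
      _ = κ := Cardinal.add_eq_self hκinf
end

section
/- Assume GCH. Let λ be an infinite cardinal and let ⟨d_α : α < λ⁺⁺⟩ be a family of sets of ordinals, each of cardinality at most λ. Then there exist a set I of ordinals below λ⁺⁺ of cardinality λ⁺⁺ and a set r of ordinals (the root) such that d_α ∩ d_β = r for all distinct α, β ∈ I; that is, ⟨d_α : α ∈ I⟩ forms a Δ-system. -/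
/-!
This is the Δ-system argument of Jech (Theorem 9.19) for `κ = λ⁺⁺`; GCH enters through
`μ ^ λ < κ` for `μ < κ`. Injecting `⋃ d_α` into `κ`, we may assume every `d_α ⊆ κ`. At `α < κ` of
cofinality `λ⁺` the set `d_α ∩ α` is bounded below `α`, and a weak pressing-down argument gives one
`β` with `d_α ∩ α ⊆ β + 1` for `κ` many `α`. There are fewer than `κ` candidates for the trace
`d_α ∩ (β + 1)`, so `κ` many of these `α` share a trace `r`. A maximal subfamily in which every
`d_α` lies below each later index then has size `κ`, and two of its members meet exactly in `r`.
-/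

open Cardinal Ordinal Order Set

universe u

def IsDeltaSystemOn {ι α : Type*} (d : ι → Set α) (I : Set ι) : Prop :=
  ∃ r : Set α, ∀ i ∈ I, ∀ j ∈ I, i ≠ j → d i ∩ d j = r

theorem IsDeltaSystemOn.of_image {ι α β : Type*} {d : ι → Set α} {I : Set ι} {U : Set α}
    {f : α → β} (hf : InjOn f U) (hdU : ∀ i ∈ I, d i ⊆ U)
    (h : IsDeltaSystemOn (fun i => f '' d i) I) : IsDeltaSystemOn d I := by
  obtain ⟨r, hr⟩ := h
  refine ⟨f ⁻¹' r ∩ U, fun i hi j hj hij => ?_⟩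
  rw [← hr i hi j hj hij, ← hf.image_inter (hdU i hi) (hdU j hj),
    hf.preimage_image_inter (inter_subset_left.trans (hdU i hi))]

theorem exists_injOn_mapsTo_of_mk_le {α β : Type u} [Nonempty β] {s : Set α} {t : Set β}
    (h : #s ≤ #t) : ∃ f : α → β, InjOn f s ∧ MapsTo f s t := by
  classical
  obtain ⟨e⟩ := h
  refine ⟨fun x => if hx : x ∈ s then e ⟨x, hx⟩ else Classical.arbitrary β, ?_, ?_⟩
  · intro x hx y hy hxy
    simp only [hx, hy, dif_pos] at hxy
    exact congrArg Subtype.val (e.injective (Subtype.ext hxy))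
  · intro x hx
    simp only [hx, dif_pos]
    exact (e _).2

namespace Cardinal

variable {κ : Cardinal.{u}}

theorem power_lt_succ_succ {c μ : Cardinal} (hc : ℵ₀ ≤ c) (h2 : 2 ^ c = succ c)
    (hμ : μ < succ (succ c)) : μ ^ c < succ (succ c) :=
  calc μ ^ c ≤ (2 ^ c) ^ c := power_le_power_right (h2 ▸ lt_succ_iff.1 hμ)
    _ = 2 ^ c := by rw [← power_mul, mul_eq_self hc]
    _ < succ (succ c) := h2 ▸ lt_succ _

theorem IsRegular.sSup_lt_ord (hκ : κ.IsRegular) {s : Set Ordinal.{u}}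
    (hs : #s < Cardinal.lift.{u + 1} κ) (h : ∀ x ∈ s, x < κ.ord) : sSup s < κ.ord :=
  Ordinal.sSup_lt_of_lt_cof (by rwa [← Ordinal.lift_cof, hκ.cof_ord]) h

theorem mk_Iic_lt_of_lt_ord (hκ : ℵ₀ ≤ κ) {b : Ordinal.{u}} (hb : b < κ.ord) :
    #(Iic b) < lift.{u + 1} κ := by
  rw [← Iio_succ, mk_Iio_ordinal, lift_lt, ← lt_ord]
  exact (isSuccLimit_ord hκ).succ_lt hb

theorem exists_mem_lt_of_lift_le_mk (hκ : ℵ₀ ≤ κ) {A : Set Ordinal.{u}}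
    (hA : lift.{u + 1} κ ≤ #A) {b : Ordinal.{u}} (hb : b < κ.ord) : ∃ a ∈ A, b < a := by
  by_contra! h
  exact (hA.trans (mk_le_mk_of_subset h)).not_gt (mk_Iic_lt_of_lt_ord hκ hb)

end Cardinal

namespace Ordinal

variable {g : Ordinal.{u} → Ordinal.{u}}

theorem map_le_nfp_of_lt (hg : Monotone g) {a b : Ordinal} (hb : b < nfp g a) :
    g b ≤ nfp g a := by
  obtain ⟨n, hn⟩ := lt_nfp_iff.1 hb
  calc g b ≤ g (g^[n] a) := hg hn.le
    _ = g^[n + 1] a := (Function.iterate_succ_apply' g n a).symm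
    _ ≤ nfp g a := iterate_le_nfp g a (n + 1)

theorem map_lt_deriv_of_isSuccLimit (hg : Monotone g) {o : Ordinal} (ho : IsSuccLimit o)
    {b : Ordinal} (hb : b < deriv g o) : g b < deriv g o := by
  obtain ⟨a, hao, hba⟩ := ((isNormal_deriv g).lt_iff_exists_lt ho).1 hb
  calc g b ≤ deriv g (succ a) := by
        rw [deriv_succ]
        exact map_le_nfp_of_lt hg (hba.trans_le ((le_succ _).trans (le_nfp _ _)))
    _ < deriv g o := (isNormal_deriv g).strictMono (ho.succ_lt hao)

theorem exists_lt_ord_cof_eq_map_lt (hg : Monotone g) {κ ν : Cardinal.{u}} (hκ : κ.IsRegular)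
    (hν : ν.IsRegular) (hνκ : ν < κ) (hgκ : ∀ β < κ.ord, g β < κ.ord) :
    ∃ γ < κ.ord, γ.cof = ν ∧ ∀ β < γ, g β < γ :=
  have hlim := isSuccLimit_ord hν.aleph0_le
  ⟨deriv g ν.ord, deriv_lt_ord hκ (hν.aleph0_le.trans_lt hνκ).ne' hgκ (ord_lt_ord.2 hνκ),
    by rw [cof_map_of_isNormal (isNormal_deriv g) hlim, hν.cof_ord],
    fun _ hβ => map_lt_deriv_of_isSuccLimit hg hlim hβ⟩

end Ordinal

section DeltaSystem

variable {κ θ : Cardinal.{u}}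

/-- A weak form of Fodor's lemma, on the stationary set of ordinals below `κ` of cofinality
`θ⁺`. -/
theorem exists_lift_le_mk_setOf_map_le (hκ : κ.IsRegular) (hθ : ℵ₀ ≤ θ) (hθκ : succ θ < κ)
    {f : Ordinal.{u} → Ordinal.{u}} (hf : ∀ α < κ.ord, θ < α.cof → f α < α) :
    ∃ β < κ.ord, lift.{u + 1} κ ≤ #{α | α < κ.ord ∧ f α ≤ β} := by
  by_contra! hsmall
  set T := fun β : Ordinal.{u} => {α | α < κ.ord ∧ f α ≤ β}
  have hbdd : ∀ β, BddAbove (succ '' T β) := fun β =>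
    ⟨κ.ord, by rintro _ ⟨α, hα, rfl⟩; exact succ_le_of_lt hα.1⟩
  set g := fun β : Ordinal.{u} => sSup (succ '' T β)
  have hg : Monotone g := fun β β' h =>
    csSup_le_csSup' (hbdd β') (image_mono fun α hα => ⟨hα.1, le_trans hα.2 h⟩)
  have hgκ : ∀ β < κ.ord, g β < κ.ord := fun β hβ =>
    hκ.sSup_lt_ord (mk_image_le.trans_lt (hsmall β hβ)) (by
      rintro _ ⟨α, hα, rfl⟩
      exact (isSuccLimit_ord hκ.aleph0_le).succ_lt hα.1)
  obtain ⟨γ, hγκ, hγcof, hγ⟩ := exists_lt_ord_cof_eq_map_lt hg hκ (isRegular_succ hθ) hθκ hgκ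
  have hfγ : f γ < γ := hf γ hγκ (hγcof ▸ lt_succ θ)
  have hγg : succ γ ≤ g (f γ) := le_csSup (hbdd _) ⟨γ, ⟨hγκ, le_rfl⟩, rfl⟩
  exact (lt_succ γ).not_ge (hγg.trans (hγ _ hfγ).le)

theorem exists_lift_le_mk_setOf_inter_Iio_eq (hκ : κ.IsRegular) (hθ : ℵ₀ ≤ θ)
    (hpow : ∀ μ < κ, μ ^ θ < κ) {D : Ordinal.{u} → Set Ordinal.{u}} {A : Set Ordinal.{u}}
    (hD : ∀ α ∈ A, #(D α) ≤ lift.{u + 1} θ) (hA : lift.{u + 1} κ ≤ #A) {δ : Ordinal.{u}}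
    (hδ : δ < κ.ord) : ∃ r, lift.{u + 1} κ ≤ #{α ∈ A | D α ∩ Iio δ = r} := by
  let Q := {t : Set Ordinal.{u} // t ⊆ Iio δ ∧ #t ≤ lift.{u + 1} θ}
  have hθκ : ℵ₀ < κ := hθ.trans_lt ((cantor θ).trans (hpow 2 (hκ.nat_lt 2)))
  have hQ : #Q < (lift.{u + 1} κ).ord.cof := by
    rw [← lift_ord, ← lift_cof, hκ.cof_ord]
    calc #Q ≤ max #(Iio δ) ℵ₀ ^ lift.{u + 1} θ := mk_bounded_subset_le _ _
      _ = lift.{u + 1} (max δ.card ℵ₀ ^ θ) := by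
        rw [Cardinal.mk_Iio_ordinal, lift_power, lift_max, lift_aleph0]
      _ < lift.{u + 1} κ := lift_lt.2 (hpow _ (max_lt (lt_ord.1 hδ) hθκ))
  obtain ⟨r, t, htA, hκt, htr⟩ := infinite_pigeonhole_set
    (fun α : A => (⟨D α ∩ Iio δ, inter_subset_right,
      (mk_le_mk_of_subset inter_subset_left).trans (hD α α.2)⟩ : Q))
    _ hA (by simpa using hκ.aleph0_le) hQ
  exact ⟨r.1, hκt.trans (mk_le_mk_of_subset fun α hα => ⟨htA hα, congrArg Subtype.val (htr hα)⟩)⟩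

theorem exists_subset_lift_le_mk_forall_lt (hκ : κ.IsRegular) {A : Set Ordinal.{u}}
    (hAκ : A ⊆ Iio κ.ord) (hA : lift.{u + 1} κ ≤ #A) (s : Ordinal.{u} → Ordinal.{u})
    (hs : ∀ a ∈ A, s a < κ.ord) :
    ∃ I ⊆ A, lift.{u + 1} κ ≤ #I ∧ ∀ a ∈ I, ∀ b ∈ I, a < b → s a < b := by
  let S := {J | J ⊆ A ∧ ∀ a ∈ J, ∀ b ∈ J, a < b → s a < b}
  obtain ⟨J, hJ⟩ := zorn_subset S fun c hcS hc => by
    refine ⟨⋃₀ c, ⟨sUnion_subset fun J hJ => (hcS hJ).1, ?_⟩, fun J => subset_sUnion_of_mem⟩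
    rintro a ⟨Ja, hJa, ha⟩ b ⟨Jb, hJb, hb⟩ hab
    rcases hc.total hJa hJb with h | h
    · exact (hcS hJb).2 a (h ha) b hb hab
    · exact (hcS hJa).2 a ha b (h hb) hab
  refine ⟨J, hJ.prop.1, ?_, hJ.prop.2⟩
  by_contra! hJκ
  have hJbdd : BddAbove J := ⟨κ.ord, fun a ha => (hAκ (hJ.prop.1 ha)).le⟩
  have hsJbdd : BddAbove (s '' J) :=
    ⟨κ.ord, by rintro _ ⟨a, ha, rfl⟩; exact (hs a (hJ.prop.1 ha)).le⟩
  obtain ⟨b, hbA, hb⟩ := exists_mem_lt_of_lift_le_mk hκ.aleph0_le hA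
    (max_lt (hκ.sSup_lt_ord hJκ fun a ha => hAκ (hJ.prop.1 ha))
      (hκ.sSup_lt_ord (mk_image_le.trans_lt hJκ) (by
        rintro _ ⟨a, ha, rfl⟩
        exact hs a (hJ.prop.1 ha))))
  rw [max_lt_iff] at hb
  have hins : ∀ x ∈ insert b J, ∀ y ∈ insert b J, x < y → s x < y := by
    rintro x (rfl | hx) y (rfl | hy) hxy
    · exact (hxy.ne rfl).elim
    · exact absurd ((le_csSup hJbdd hy).trans_lt hb.1) hxy.not_gt
    · exact (le_csSup hsJbdd ⟨x, hx, rfl⟩).trans_lt hb.2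
    · exact hJ.prop.2 x hx y hy hxy
  have hbJ : b ∈ J := hJ.mem_of_prop_insert ⟨insert_subset hbA hJ.prop.1, hins⟩
  exact (le_csSup hJbdd hbJ).not_gt hb.1

theorem exists_isDeltaSystemOn_of_subset_Iio_ord (hκ : κ.IsRegular) (hθ : ℵ₀ ≤ θ)
    (hpow : ∀ μ < κ, μ ^ θ < κ) {D : Ordinal.{u} → Set Ordinal.{u}}
    (hDκ : ∀ α < κ.ord, D α ⊆ Iio κ.ord) (hD : ∀ α < κ.ord, #(D α) ≤ lift.{u + 1} θ) :
    ∃ I ⊆ Iio κ.ord, #I = lift.{u + 1} κ ∧ IsDeltaSystemOn D I := by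
  have hθκ : succ θ < κ := (succ_le_of_lt (cantor θ)).trans_lt (hpow 2 (hκ.nat_lt 2))
  obtain ⟨β, hβκ, hβ⟩ := exists_lift_le_mk_setOf_map_le hκ hθ hθκ
    (f := fun α => sSup (D α ∩ Iio α)) fun α hα hαθ => by
      refine sSup_lt_of_lt_cof ?_ fun x hx => hx.2
      calc #↑(D α ∩ Iio α) ≤ lift.{u + 1} θ :=
            (mk_le_mk_of_subset inter_subset_left).trans (hD α hα)
        _ < lift.{u + 1} α.cof := lift_lt.2 hαθ
        _ = (Ordinal.lift.{u + 1} α).cof := lift_cof α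
  obtain ⟨r, hr⟩ := exists_lift_le_mk_setOf_inter_Iio_eq hκ hθ hpow (fun α hα => hD α hα.1) hβ
    ((isSuccLimit_ord hκ.aleph0_le).succ_lt hβκ)
  obtain ⟨I, hIA, hIκ, hI⟩ := exists_subset_lift_le_mk_forall_lt hκ (fun α hα => hα.1.1) hr
    (fun α => sSup (D α)) fun α hα =>
      hκ.sSup_lt_ord ((hD α hα.1.1).trans_lt (lift_lt.2 ((le_succ θ).trans_lt hθκ)))
        (hDκ α hα.1.1)
  have hI_sub : I ⊆ Iio κ.ord := fun α hα => (hIA hα).1.1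
  have hroot : ∀ a ∈ I, ∀ b ∈ I, a < b → D a ∩ D b = r := by
    intro a ha b hb hab
    obtain ⟨⟨haκ, -⟩, hra⟩ := hIA ha
    obtain ⟨⟨-, hbβ⟩, hrb⟩ := hIA hb
    ext x
    refine ⟨fun ⟨hxa, hxb⟩ => ?_, fun hx => ⟨(hra.ge hx).1, (hrb.ge hx).1⟩⟩
    have hxb' : x < b :=
      (le_csSup ⟨κ.ord, fun y hy => (hDκ a haκ hy).le⟩ hxa).trans_lt (hI a ha b hb hab)
    rw [← hrb]
    have hbdd : BddAbove (D b ∩ Iio b) := ⟨b, fun y hy => hy.2.le⟩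
    exact ⟨hxb, lt_succ_of_le ((le_csSup hbdd ⟨hxb, hxb'⟩).trans hbβ)⟩
  refine ⟨I, hI_sub, le_antisymm ?_ hIκ, r, fun a ha b hb hab => ?_⟩
  · calc #I ≤ #(Iio κ.ord) := mk_le_mk_of_subset hI_sub
      _ = lift.{u + 1} κ := by rw [Cardinal.mk_Iio_ordinal, card_ord]
  · rcases hab.lt_or_gt with h | h
    · exact hroot a ha b hb h
    · rw [inter_comm]
      exact hroot b hb a ha h

theorem exists_isDeltaSystemOn (hκ : κ.IsRegular) (hθ : ℵ₀ ≤ θ) (hpow : ∀ μ < κ, μ ^ θ < κ)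
    (d : Ordinal.{u} → Set Ordinal.{u}) (hd : ∀ α < κ.ord, #(d α) ≤ lift.{u + 1} θ) :
    ∃ I ⊆ Iio κ.ord, #I = lift.{u + 1} κ ∧ IsDeltaSystemOn d I := by
  let U := ⋃ α ∈ Iio κ.ord, d α
  have hU : #U ≤ #(Iio κ.ord) := by
    calc #U ≤ #(Iio κ.ord) * ⨆ α : Iio κ.ord, #(d α) := mk_biUnion_le _ _
      _ ≤ lift.{u + 1} κ * lift.{u + 1} κ := by
        rw [Cardinal.mk_Iio_ordinal, card_ord]
        gcongr
        have hθκ : θ < κ := (cantor θ).trans (hpow 2 (hκ.nat_lt 2))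
        exact ciSup_le' fun α => (hd α α.2).trans (lift_le.2 hθκ.le)
      _ = #(Iio κ.ord) := by
        rw [mul_eq_self (by simpa using hκ.aleph0_le), Cardinal.mk_Iio_ordinal, card_ord]
  obtain ⟨f, hfU, hfκ⟩ := exists_injOn_mapsTo_of_mk_le hU
  obtain ⟨I, hIκ, hI, hΔ⟩ := exists_isDeltaSystemOn_of_subset_Iio_ord hκ hθ hpow
    (D := fun α => f '' d α) (fun α hα => (hfκ.mono_left (subset_biUnion_of_mem hα)).image_subset)
    fun α hα => mk_image_le.trans (hd α hα)
  exact ⟨I, hIκ, hI, hΔ.of_image hfU fun α hα => subset_biUnion_of_mem (hIκ hα)⟩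

end DeltaSystem

/-- Assume GCH.  Let λ be an infinite cardinal and ⟨d_α : α < λ⁺⁺⟩ a family of
sets of ordinals, each of cardinality at most λ.  Then there is a set I of
ordinals below λ⁺⁺ of cardinality λ⁺⁺ and a root r such that d_α ∩ d_β = r for
all distinct α, β ∈ I. -/
theorem statement8
    (gch : ∀ c : Cardinal.{0}, ℵ₀ ≤ c → (2 : Cardinal.{0}) ^ c = Order.succ c)
    (lam : Cardinal.{0}) (hlam : ℵ₀ ≤ lam)
    (d : Ordinal.{0} → Set Ordinal.{0})
    (hd : ∀ α < (Order.succ (Order.succ lam)).ord, #(d α) ≤ Cardinal.lift.{1} lam) :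
    ∃ I : Set Ordinal.{0},
      I ⊆ Set.Iio (Order.succ (Order.succ lam)).ord ∧
      #I = Cardinal.lift.{1} (Order.succ (Order.succ lam)) ∧
      ∃ r : Set Ordinal.{0}, ∀ α ∈ I, ∀ β ∈ I, α ≠ β → d α ∩ d β = r :=
  exists_isDeltaSystemOn (isRegular_succ (hlam.trans (le_succ lam))) hlam
    (fun _ hμ => power_lt_succ_succ hlam (gch lam hlam) hμ) d hd
end
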